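/- Let F be a field and 1 ≤ i ≤ d−1. If w ∈ ⋀^i F^d is nonzero and decomposable (i.e., w = v₁ ∧ ⋯ ∧ v_i for some v₁, …, v_i ∈ F^d), then its Hodge dual *w ∈ ⋀^{d−i} F^d is decomposable. -/

import Mathlib

open scoped Classical

noncomputable section

/-- the sign `σ_I = (-1)^{i(i+1)/2 + a₁ + ⋯ + a_i}` for `I = {a₁ < ⋯ < a_i} ⊆ {1, …, d}`
(elements of `Fin d` are 0-based, so `a_s = (element) + 1`). -/
def sgn {d : ℕ} (I : Finset (Fin d)) : ℤ :=
  (-1) ^ (I.card * (I.card + 1) / 2 + ∑ a ∈ I, ((a : ℕ) + 1))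

/-- The Hodge dual operator `* : ⋀^i F^d → ⋀^{d-i} F^d`, in coordinates with respect to the
standard bases `(e_I)` of the exterior powers: `*(e_I) = σ_I e_{I^c}`. -/
def hodge {K : Type*} [Field K] (d i : ℕ) (h : i ≤ d)
    (w : {I : Finset (Fin d) // I.card = i} → K) :
    {J : Finset (Fin d) // J.card = d - i} → K :=
  fun J => ((sgn (J.1ᶜ) : ℤ) : K) * w ⟨J.1ᶜ, by
    rw [Finset.card_compl, J.2, Fintype.card_fin]; omega⟩

/-- the `i × i` minor of a `d × i` matrix with row set `I`; the coordinates of the wedge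
product `v₁ ∧ ⋯ ∧ v_i` of the columns in the standard basis of `⋀^i F^d` are the minors. -/
def minor {K : Type*} [Field K] {d i : ℕ} (s : Matrix (Fin d) (Fin i) K)
    (I : {I : Finset (Fin d) // I.card = i}) : K :=
  (s.submatrix (fun a : Fin i => ((I.1.orderIsoOfFin I.2 a : {x // x ∈ I.1}) : Fin d)) id).det

namespace Stmt10Aux
open Finset Equiv

variable {d i n : ℕ}

theorem compl_card (hd : d = i + n) {I : Finset (Fin d)} (hI : I.card = i) : Iᶜ.card = n := by
  rw [Finset.card_compl, hI, Fintype.card_fin]; omega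

def elimFun (hd : d = i + n) (I : Finset (Fin d)) (hI : I.card = i) : Fin i ⊕ Fin n → Fin d :=
  Sum.elim (I.orderEmbOfFin hI) (Iᶜ.orderEmbOfFin (compl_card hd hI))

theorem elimFun_bij (hd : d = i + n) (I : Finset (Fin d)) (hI : I.card = i) :
    Function.Bijective (elimFun hd I hI) := by
  constructor
  · rintro (s | s) (t | t) h <;> simp only [elimFun, Sum.elim_inl, Sum.elim_inr] at h
    · exact congrArg Sum.inl ((I.orderEmbOfFin hI).injective h)
    · exact absurd (h ▸ I.orderEmbOfFin_mem hI s)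
        (Finset.mem_compl.mp (Iᶜ.orderEmbOfFin_mem (compl_card hd hI) t))
    · exact absurd (h ▸ I.orderEmbOfFin_mem hI t)
        (Finset.mem_compl.mp (Iᶜ.orderEmbOfFin_mem (compl_card hd hI) s))
    · exact congrArg Sum.inr ((Iᶜ.orderEmbOfFin _).injective h)
  · intro x
    by_cases hx : x ∈ I
    · refine ⟨Sum.inl ((I.orderIsoOfFin hI).symm ⟨x, hx⟩), ?_⟩
      simp [elimFun, ← Finset.coe_orderIsoOfFin_apply]
    · refine ⟨Sum.inr ((Iᶜ.orderIsoOfFin (compl_card hd hI)).symm ⟨x, by simpa using hx⟩), ?_⟩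
      simp [elimFun, ← Finset.coe_orderIsoOfFin_apply]

def psi (hd : d = i + n) (I : Finset (Fin d)) (hI : I.card = i) : (Fin i ⊕ Fin n) ≃ Fin d :=
  Equiv.ofBijective _ (elimFun_bij hd I hI)

theorem psi_apply (hd : d = i + n) (I : Finset (Fin d)) (hI : I.card = i) (x : Fin i ⊕ Fin n) :
    psi hd I hI x = elimFun hd I hI x := rfl

def phi (hd : d = i + n) : Fin d ≃ (Fin i ⊕ Fin n) := (finCongr hd).trans finSumFinEquiv.symm

def pim (hd : d = i + n) (I : Finset (Fin d)) (hI : I.card = i) : Equiv.Perm (Fin d) :=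
  (phi hd).trans (psi hd I hI)

end Stmt10Aux

namespace Stmt10Aux
open Finset Equiv
variable {d i n : ℕ}

theorem swap_enum_A {s : Finset (Fin d)} {k : ℕ} (hs : s.card = k) {a b : Fin d}
    (hab : (a : ℕ) + 1 = (b : ℕ)) (ha : a ∉ s) (hb : b ∈ s)
    (hs' : (insert a (s.erase b)).card = k) :
    (fun t => Equiv.swap a b (s.orderEmbOfFin hs t)) = (insert a (s.erase b)).orderEmbOfFin hs' := by
  apply Finset.orderEmbOfFin_unique
  · intro t
    have hxs : s.orderEmbOfFin hs t ∈ s := s.orderEmbOfFin_mem hs t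
    set x := s.orderEmbOfFin hs t with hx
    by_cases hxb : x = b
    · rw [hxb, Equiv.swap_apply_right]; exact Finset.mem_insert_self _ _
    · rw [Equiv.swap_apply_of_ne_of_ne (fun h => ha (by rw [← h]; exact hxs)) hxb]
      exact Finset.mem_insert_of_mem (Finset.mem_erase.mpr ⟨hxb, hxs⟩)
  · intro t t' htt
    show Equiv.swap a b (s.orderEmbOfFin hs t) < Equiv.swap a b (s.orderEmbOfFin hs t')
    have hmono := (s.orderEmbOfFin hs).strictMono htt
    have hxs : s.orderEmbOfFin hs t ∈ s := s.orderEmbOfFin_mem hs t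
    have hys : s.orderEmbOfFin hs t' ∈ s := s.orderEmbOfFin_mem hs t'
    set x := s.orderEmbOfFin hs t with hxd
    set y := s.orderEmbOfFin hs t' with hyd
    have hxa : x ≠ a := fun h => ha (by rw [← h]; exact hxs)
    have hya : y ≠ a := fun h => ha (by rw [← h]; exact hys)
    rw [Fin.lt_def] at hmono
    by_cases hxb : x = b
    · have hyb : y ≠ b := fun h => by
        have : (x:ℕ) = b := congrArg Fin.val hxb
        have : (y:ℕ) = b := congrArg Fin.val h
        omega
      rw [hxb, Equiv.swap_apply_right, Equiv.swap_apply_of_ne_of_ne hya hyb, Fin.lt_def]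
      have hx' : (x:ℕ) = b := congrArg Fin.val hxb
      omega
    · rw [Equiv.swap_apply_of_ne_of_ne hxa hxb]
      by_cases hyb : y = b
      · rw [hyb, Equiv.swap_apply_right, Fin.lt_def]
        have hxbv : (x : ℕ) ≠ (b : ℕ) := fun h => hxb (Fin.ext h)
        have hxav : (x : ℕ) ≠ (a : ℕ) := fun h => hxa (Fin.ext h)
        have : (y : ℕ) = (b : ℕ) := congrArg Fin.val hyb
        omega
      · rw [Equiv.swap_apply_of_ne_of_ne hya hyb]; exact Fin.lt_def.mpr hmono

theorem swap_enum_B {s : Finset (Fin d)} {k : ℕ} (hs : s.card = k) {a b : Fin d}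
    (hab : (a : ℕ) + 1 = (b : ℕ)) (ha : a ∈ s) (hb : b ∉ s)
    (hs' : (insert b (s.erase a)).card = k) :
    (fun t => Equiv.swap a b (s.orderEmbOfFin hs t)) = (insert b (s.erase a)).orderEmbOfFin hs' := by
  apply Finset.orderEmbOfFin_unique
  · intro t
    have hxs : s.orderEmbOfFin hs t ∈ s := s.orderEmbOfFin_mem hs t
    set x := s.orderEmbOfFin hs t with hx
    by_cases hxa : x = a
    · rw [hxa, Equiv.swap_apply_left]; exact Finset.mem_insert_self _ _
    · rw [Equiv.swap_apply_of_ne_of_ne hxa (fun h => hb (by rw [← h]; exact hxs))]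
      exact Finset.mem_insert_of_mem (Finset.mem_erase.mpr ⟨hxa, hxs⟩)
  · intro t t' htt
    show Equiv.swap a b (s.orderEmbOfFin hs t) < Equiv.swap a b (s.orderEmbOfFin hs t')
    have hmono := (s.orderEmbOfFin hs).strictMono htt
    have hxs : s.orderEmbOfFin hs t ∈ s := s.orderEmbOfFin_mem hs t
    have hys : s.orderEmbOfFin hs t' ∈ s := s.orderEmbOfFin_mem hs t'
    set x := s.orderEmbOfFin hs t with hxd
    set y := s.orderEmbOfFin hs t' with hyd
    have hxb : x ≠ b := fun h => hb (by rw [← h]; exact hxs)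
    have hyb : y ≠ b := fun h => hb (by rw [← h]; exact hys)
    rw [Fin.lt_def] at hmono
    by_cases hxa : x = a
    · have hya : y ≠ a := fun h => by
        have : (x:ℕ) = a := congrArg Fin.val hxa
        have : (y:ℕ) = a := congrArg Fin.val h
        omega
      rw [hxa, Equiv.swap_apply_left, Equiv.swap_apply_of_ne_of_ne hya hyb, Fin.lt_def]
      have : (x : ℕ) = (a : ℕ) := congrArg Fin.val hxa
      have hyav : (y : ℕ) ≠ (a : ℕ) := fun h => hya (Fin.ext h)
      have hybv : (y : ℕ) ≠ (b : ℕ) := fun h => hyb (Fin.ext h)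
      omega
    · rw [Equiv.swap_apply_of_ne_of_ne hxa hxb]
      by_cases hya : y = a
      · rw [hya, Equiv.swap_apply_left, Fin.lt_def]
        have : (y:ℕ) = a := congrArg Fin.val hya
        omega
      · rw [Equiv.swap_apply_of_ne_of_ne hya hyb]; exact Fin.lt_def.mpr hmono

end Stmt10Aux

namespace Stmt10Aux
open Finset Equiv
variable {d i n : ℕ}

def sgn' {d : ℕ} (I : Finset (Fin d)) : ℤ :=
  (-1) ^ (I.card * (I.card + 1) / 2 + ∑ a ∈ I, ((a : ℕ) + 1))

theorem orderEmbOfFin_congr {s t : Finset (Fin d)} (hst : s = t) {k : ℕ} (hs : s.card = k)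
    (ht : t.card = k) : ⇑(s.orderEmbOfFin hs) = ⇑(t.orderEmbOfFin ht) := by
  subst hst; rfl

theorem compl_swap {I : Finset (Fin d)} {a b : Fin d} (hne : a ≠ b) (ha : a ∉ I) (hb : b ∈ I) :
    (insert a (I.erase b))ᶜ = insert b (Iᶜ.erase a) := by
  ext x
  simp only [Finset.mem_compl, Finset.mem_insert, Finset.mem_erase]
  constructor
  · intro h
    push_neg at h
    by_cases hxb : x = b
    · exact Or.inl hxb
    · exact Or.inr ⟨h.1, h.2 hxb⟩
  · rintro (rfl | ⟨hxa, hxI⟩)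
    · rintro (h | ⟨hh, _⟩)
      · exact hne h.symm
      · exact hh rfl
    · rintro (h | ⟨_, h2⟩)
      · exact hxa h
      · exact hxI h2

theorem card_swap {I : Finset (Fin d)} (hI : I.card = i) {a b : Fin d} (ha : a ∉ I) (hb : b ∈ I) :
    (insert a (I.erase b)).card = i := by
  rw [Finset.card_insert_of_notMem (fun h => ha (Finset.mem_of_mem_erase h)),
    Finset.card_erase_of_mem hb, hI]
  have : 1 ≤ i := hI ▸ Finset.card_pos.mpr ⟨b, hb⟩
  omega

theorem pim_swap (hd : d = i + n) {I : Finset (Fin d)} (hI : I.card = i) {a b : Fin d}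
    (hab : (a : ℕ) + 1 = (b : ℕ)) (ha : a ∉ I) (hb : b ∈ I) :
    pim hd (insert a (I.erase b)) (card_swap hI ha hb) =
      (pim hd I hI).trans (Equiv.swap a b) := by
  have hne : a ≠ b := fun h => by rw [h] at hab; omega
  apply Equiv.ext
  intro c
  simp only [pim, Equiv.trans_apply, psi_apply]
  rcases hc : phi hd c with s | t
  · show elimFun hd _ _ (Sum.inl s) = Equiv.swap a b (elimFun hd I hI (Sum.inl s))
    simp only [elimFun, Sum.elim_inl]
    rw [← swap_enum_A hI hab ha hb (card_swap hI ha hb)]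
  · show elimFun hd _ _ (Sum.inr t) = Equiv.swap a b (elimFun hd I hI (Sum.inr t))
    simp only [elimFun, Sum.elim_inr]
    have hB := swap_enum_B (compl_card hd hI) hab (Finset.mem_compl.mpr ha)
      (fun h => (Finset.mem_compl.mp h) hb)
      (by rw [← compl_swap hne ha hb]; exact compl_card hd (card_swap hI ha hb))
    rw [orderEmbOfFin_congr (compl_swap hne ha hb) (compl_card hd (card_swap hI ha hb))
      (ht := by rw [← compl_swap hne ha hb]; exact compl_card hd (card_swap hI ha hb)), ← hB]

theorem enum_Iio (hlt : i < d) (hI : (Finset.Iio (⟨i, hlt⟩ : Fin d)).card = i) :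
    ⇑((Finset.Iio (⟨i, hlt⟩ : Fin d)).orderEmbOfFin hI) =
      fun k : Fin i => (⟨(k : ℕ), lt_trans k.2 hlt⟩ : Fin d) := by
  symm
  apply Finset.orderEmbOfFin_unique
  · intro k
    exact Finset.mem_Iio.mpr (Fin.mk_lt_mk.mpr k.2)
  · intro k k' hkk
    exact Fin.mk_lt_mk.mpr (Fin.lt_def.mp hkk)

theorem enum_Iio_compl (hd : d = i + n) (hlt : i < d)
    (hc : (Finset.Iio (⟨i, hlt⟩ : Fin d))ᶜ.card = n) :
    ⇑((Finset.Iio (⟨i, hlt⟩ : Fin d))ᶜ.orderEmbOfFin hc) =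
      fun t : Fin n => (⟨i + (t : ℕ), by omega⟩ : Fin d) := by
  symm
  apply Finset.orderEmbOfFin_unique
  · intro t
    refine Finset.mem_compl.mpr (fun h => ?_)
    have := Fin.mk_lt_mk.mp (Finset.mem_Iio.mp h)
    omega
  · intro t t' htt
    exact Fin.mk_lt_mk.mpr (by have := Fin.lt_def.mp htt; omega)

theorem pim_Iio (hd : d = i + n) (hlt : i < d) (hI : (Finset.Iio (⟨i, hlt⟩ : Fin d)).card = i) :
    pim hd (Finset.Iio (⟨i, hlt⟩ : Fin d)) hI = 1 := by
  apply Equiv.ext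
  intro c
  simp only [pim, Equiv.trans_apply, psi_apply, Equiv.Perm.coe_one, id_eq]
  rcases hc : phi hd c with s | t
  · have h3 : (finCongr hd c : Fin (i + n)) = finSumFinEquiv (Sum.inl s) := by
      rw [← hc]; simp [phi]
    have hcv : (c : ℕ) = (s : ℕ) := by
      have := congrArg Fin.val (h3.trans (finSumFinEquiv_apply_left s))
      simpa using this
    show elimFun hd _ _ (Sum.inl s) = c
    simp only [elimFun, Sum.elim_inl, enum_Iio hlt hI]
    exact Fin.ext hcv.symm
  · have h3 : (finCongr hd c : Fin (i + n)) = finSumFinEquiv (Sum.inr t) := by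
      rw [← hc]; simp [phi]
    have hcv : (c : ℕ) = i + (t : ℕ) := by
      have := congrArg Fin.val (h3.trans (finSumFinEquiv_apply_right t))
      simpa using this
    show elimFun hd _ _ (Sum.inr t) = c
    simp only [elimFun, Sum.elim_inr, enum_Iio_compl hd hlt]
    exact Fin.ext hcv.symm

theorem sgn'_Iio (hlt : i < d) : sgn' (Finset.Iio (⟨i, hlt⟩ : Fin d)) = 1 := by
  have hmap := Fin.map_valEmbedding_Iio (a := (⟨i, hlt⟩ : Fin d))
  have hsum : ∑ a ∈ Finset.Iio (⟨i, hlt⟩ : Fin d), ((a : ℕ) + 1)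
      = ∑ k ∈ Finset.range i, (k + 1) := by
    have := (Finset.sum_map (Finset.Iio (⟨i, hlt⟩ : Fin d)) Fin.valEmbedding (fun m => m + 1)).symm
    simp only [Fin.valEmbedding_apply] at this
    rw [this, hmap]
    simp [Nat.Iio_eq_range]
  have hcard : (Finset.Iio (⟨i, hlt⟩ : Fin d)).card = i := by rw [Fin.card_Iio]
  have hrange : ∑ k ∈ Finset.range i, (k + 1) = (∑ k ∈ Finset.range i, k) + i := by
    rw [Finset.sum_add_distrib, Finset.sum_const, Finset.card_range, smul_eq_mul, mul_one]
  have hgauss := Finset.sum_range_id_mul_two i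
  have htri : i * (i + 1) / 2 * 2 = i * (i + 1) :=
    Nat.div_mul_cancel (Nat.even_mul_succ_self i).two_dvd
  have h1 : i * (i + 1) = i * i + i := by ring
  have h2 : i * (i - 1) + i = i * i := by
    cases i with
    | zero => simp
    | succ m => rw [Nat.succ_sub_one]; ring
  rw [sgn', hcard, hsum, hrange]
  have he : i * (i + 1) / 2 + ((∑ k ∈ Finset.range i, k) + i) = i * i + i := by omega
  rw [he]
  have heven : Even (i * i + i) := by
    have := Nat.even_mul_succ_self i
    rwa [h1] at this
  exact Even.neg_one_pow heven

end Stmt10Aux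

namespace Stmt10Aux
open Finset Equiv
variable {d i n : ℕ}

theorem sign_pim (hd : d = i + n) (hn : 0 < n) :
    ∀ (N : ℕ) (I : Finset (Fin d)) (hI : I.card = i), (∑ x ∈ I, (x : ℕ)) = N →
      ((Equiv.Perm.sign (pim hd I hI) : ℤˣ) : ℤ) = sgn' I := by
  intro N
  induction N using Nat.strong_induction_on with
  | _ N IH =>
    intro I hI hsum
    by_cases hex : ∃ b ∈ I, ∃ a : Fin d, (a : ℕ) + 1 = (b : ℕ) ∧ a ∉ I
    · obtain ⟨b, hb, a, hab, ha⟩ := hex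
      have hI' : (insert a (I.erase b)).card = i := card_swap hI ha hb
      have hne : a ≠ b := fun h => by rw [h] at hab; omega
      have hnotmem : a ∉ I.erase b := fun h => ha (Finset.mem_of_mem_erase h)
      have hs1 : ∑ x ∈ I.erase b, (x : ℕ) + (b : ℕ) = ∑ x ∈ I, (x : ℕ) :=
        Finset.sum_erase_add _ _ hb
      have hs2 : ∑ x ∈ insert a (I.erase b), (x : ℕ) = (a : ℕ) + ∑ x ∈ I.erase b, (x : ℕ) :=
        Finset.sum_insert hnotmem
      have hIH := IH (N - 1) (by omega) (insert a (I.erase b)) hI' (by omega)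
      have hps := pim_swap hd hI hab ha hb
      have hsign : ((Equiv.Perm.sign (pim hd (insert a (I.erase b)) hI') : ℤˣ) : ℤ)
          = -((Equiv.Perm.sign (pim hd I hI) : ℤˣ) : ℤ) := by
        rw [show pim hd (insert a (I.erase b)) hI' = Equiv.swap a b * pim hd I hI from hps,
          map_mul, Equiv.Perm.sign_swap hne]
        push_cast
        ring
      have hsum3 : ∑ x ∈ I, ((x : ℕ) + 1) = (∑ x ∈ insert a (I.erase b), ((x : ℕ) + 1)) + 1 := by
        have e1 : ∑ x ∈ I.erase b, ((x : ℕ) + 1) + ((b : ℕ) + 1) = ∑ x ∈ I, ((x : ℕ) + 1) :=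
          Finset.sum_erase_add _ _ hb
        have e2 : ∑ x ∈ insert a (I.erase b), ((x : ℕ) + 1)
            = ((a : ℕ) + 1) + ∑ x ∈ I.erase b, ((x : ℕ) + 1) := Finset.sum_insert hnotmem
        omega
      have hsgn : sgn' I = -sgn' (insert a (I.erase b)) := by
        rw [sgn', sgn', hI', hI, hsum3,
          show i * (i + 1) / 2 + ((∑ x ∈ insert a (I.erase b), ((x : ℕ) + 1)) + 1)
            = (i * (i + 1) / 2 + ∑ x ∈ insert a (I.erase b), ((x : ℕ) + 1)) + 1 from by ring,
          pow_succ]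
        ring
      rw [hsgn, ← hIH]
      linarith [hsign]
    · push_neg at hex
      have hlt : i < d := by omega
      have down : ∀ (g : ℕ) (x : Fin d), x ∈ I → ∀ (k : ℕ) (hkd : k < d),
          k + g = (x : ℕ) → (⟨k, hkd⟩ : Fin d) ∈ I := by
        intro g
        induction g with
        | zero =>
          intro x hx k hkd hk
          have : (⟨k, hkd⟩ : Fin d) = x := Fin.ext (show k = (x : ℕ) by omega)
          rwa [this]
        | succ g IHg =>
          intro x hx k hkd hk
          have hk1 : k + 1 < d := by omega
          have hy : (⟨k + 1, hk1⟩ : Fin d) ∈ I := IHg x hx (k + 1) hk1 (by omega)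
          exact hex _ hy ⟨k, hkd⟩ rfl
      have hsub : I ⊆ Finset.Iio (⟨i, hlt⟩ : Fin d) := by
        intro x hx
        refine Finset.mem_Iio.mpr (Fin.lt_def.mpr (show (x : ℕ) < i from ?_))
        by_contra hge
        push_neg at hge
        have hiic : Finset.Iic x ⊆ I := by
          intro y hy
          have hyx : (y : ℕ) ≤ (x : ℕ) := Fin.le_def.mp (Finset.mem_Iic.mp hy)
          have := down ((x : ℕ) - (y : ℕ)) x hx (y : ℕ) y.2 (by omega)
          simpa using this
        have hcard := Finset.card_le_card hiic
        rw [Fin.card_Iic, hI] at hcard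
        omega
      have hIeq : I = Finset.Iio (⟨i, hlt⟩ : Fin d) :=
        Finset.eq_of_subset_of_card_le hsub (by rw [Fin.card_Iio, hI])
      subst hIeq
      rw [pim_Iio hd hlt hI, sgn'_Iio hlt]
      simp

end Stmt10Aux

namespace Stmt10Aux
open Finset Equiv Matrix
variable {d i n : ℕ} {F : Type*} [Field F]

def bigM (hd : d = i + n) (I : Finset (Fin d)) (hI : I.card = i)
    (v : Matrix (Fin d) (Fin i) F) : Matrix (Fin d) (Fin d) F :=
  Matrix.of fun a c => Sum.elim (fun s => v a s)
    (fun t => if a = Iᶜ.orderEmbOfFin (compl_card hd hI) t then (1 : F) else 0) (phi hd c)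

theorem det_bigM (hd : d = i + n) (hn : 0 < n) (I : Finset (Fin d)) (hI : I.card = i)
    (v : Matrix (Fin d) (Fin i) F) :
    (bigM hd I hI v).det = ((sgn' I : ℤ) : F) * (v.submatrix (⇑(I.orderEmbOfFin hI)) id).det := by
  set eI := ⇑(I.orderEmbOfFin hI) with heI
  set eJ := ⇑(Iᶜ.orderEmbOfFin (compl_card hd hI)) with heJ
  set ψ := psi hd I hI with hψ
  set N : Matrix (Fin i ⊕ Fin n) (Fin i ⊕ Fin n) F :=
    Matrix.fromBlocks (v.submatrix eI id) 0 (v.submatrix eJ id) 1 with hN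
  have hM : bigM hd I hI v = (N.submatrix ψ.symm ψ.symm).submatrix id ⇑(pim hd I hI) := by
    ext a c
    simp only [Matrix.submatrix_apply, id_eq, bigM, Matrix.of_apply]
    have hpim : ψ.symm (pim hd I hI c) = phi hd c := by
      simp [pim, hψ]
    rw [hpim]
    rcases hc : phi hd c with s | t
    · simp only [Sum.elim_inl]
      rcases hψa : ψ.symm a with s' | t'
      · have ha : a = ψ (Sum.inl s') := by rw [← hψa, Equiv.apply_symm_apply]
        rw [ha]
        show v (elimFun hd I hI (Sum.inl s')) s = N (Sum.inl s') (Sum.inl s)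
        simp [hN, elimFun, heI]
      · have ha : a = ψ (Sum.inr t') := by rw [← hψa, Equiv.apply_symm_apply]
        rw [ha]
        show v (elimFun hd I hI (Sum.inr t')) s = N (Sum.inr t') (Sum.inl s)
        simp [hN, elimFun, heJ]
    · simp only [Sum.elim_inr]
      rcases hψa : ψ.symm a with s' | t'
      · have ha : a = ψ (Sum.inl s') := by rw [← hψa, Equiv.apply_symm_apply]
        have hane : ψ (Sum.inl s') ≠ eJ t := by
          intro h
          have h1 : elimFun hd I hI (Sum.inl s') = eJ t := h
          have h2 : eI s' ∈ I := I.orderEmbOfFin_mem hI s'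
          have h3 : eJ t ∈ Iᶜ := Iᶜ.orderEmbOfFin_mem (compl_card hd hI) t
          rw [show elimFun hd I hI (Sum.inl s') = eI s' from rfl] at h1
          rw [h1] at h2
          exact (Finset.mem_compl.mp h3) h2
        rw [ha, if_neg hane]
        show (0 : F) = N (Sum.inl s') (Sum.inr t)
        simp [hN]
      · have ha : a = ψ (Sum.inr t') := by rw [← hψa, Equiv.apply_symm_apply]
        rw [ha]
        show (if ψ (Sum.inr t') = eJ t then (1:F) else 0) = N (Sum.inr t') (Sum.inr t)
        have : ψ (Sum.inr t') = eJ t' := rfl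
        rw [this]
        have hinj : eJ t' = eJ t ↔ t' = t :=
          ⟨fun h => (Iᶜ.orderEmbOfFin (compl_card hd hI)).injective h, fun h => by rw [h]⟩
        simp only [hN, Matrix.fromBlocks_apply₂₂, Matrix.one_apply]
        by_cases htt : t' = t
        · rw [if_pos (hinj.mpr htt), if_pos htt]
        · rw [if_neg (fun h => htt (hinj.mp h)), if_neg htt]
  rw [hM, Matrix.det_permute' (pim hd I hI), Matrix.det_submatrix_equiv_self, hN,
    Matrix.det_fromBlocks_zero₁₂, Matrix.det_one, mul_one]
  congr 1
  have := sign_pim hd hn (∑ x ∈ I, (x : ℕ)) I hI rfl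
  have h2 : ((Equiv.Perm.sign (pim hd I hI) : ℤˣ) : ℤ) = sgn' I := this
  calc ((Equiv.Perm.sign (pim hd I hI) : ℤˣ) : F)
      = (((Equiv.Perm.sign (pim hd I hI) : ℤˣ) : ℤ) : F) := by push_cast; ring
    _ = ((sgn' I : ℤ) : F) := by rw [h2]

end Stmt10Aux


open Finset Equiv Matrix Stmt10Aux

/-- **Remark 4.3.** Let `F` be a field and `1 ≤ i ≤ d-1`. If `w ∈ ⋀^i F^d` is nonzero and
decomposable (its coordinates are the `i × i` minors of a `d × i` matrix `v`, i.e.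
`w = v₁ ∧ ⋯ ∧ v_i` for the columns `v₁, …, v_i`), then `*w ∈ ⋀^{d-i} F^d` is decomposable. -/
theorem stmt10 (F : Type*) [Field F] (d i : ℕ) (hi : 1 ≤ i) (hid : i ≤ d - 1)
    (w : {I : Finset (Fin d) // I.card = i} → F) (hw : w ≠ 0)
    (hdec : ∃ v : Matrix (Fin d) (Fin i) F, ∀ I, w I = minor v I) :
    ∃ u : Matrix (Fin d) (Fin (d - i)) F, ∀ J, hodge d i (by omega) w J = minor u J := by
  obtain ⟨v, hv⟩ := hdec
  have hd2 : 1 ≤ d := by omega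
  have hd' : d = i + (d - i) := by omega
  have hnpos : 0 < d - i := by omega
  have hsgn_eq : ∀ I : Finset (Fin d), sgn I = sgn' I := fun I => rfl
  have hex : ∃ I₀ : {I : Finset (Fin d) // I.card = i}, w I₀ ≠ 0 := by
    by_contra h
    push_neg at h
    exact hw (funext fun I => h I)
  obtain ⟨I₀, hI₀⟩ := hex
  have hrowmap : ∀ (k : ℕ) (I : {I : Finset (Fin d) // I.card = k}),
      (fun a : Fin k => ((I.1.orderIsoOfFin I.2 a : {x // x ∈ I.1}) : Fin d))
        = ⇑(I.1.orderEmbOfFin I.2) := by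
    intro k I; funext a; exact Finset.coe_orderIsoOfFin_apply _ _ _
  have hminor0 : (v.submatrix (⇑(I₀.1.orderEmbOfFin I₀.2)) id).det ≠ 0 := by
    have h := hv I₀
    rw [minor, hrowmap i I₀] at h
    rw [← h]
    exact hI₀
  have hsgn_ne : ∀ I : Finset (Fin d), ((sgn' I : ℤ) : F) ≠ 0 := by
    intro I
    rw [sgn']
    rcases Nat.even_or_odd (I.card * (I.card + 1) / 2 + ∑ a ∈ I, ((a : ℕ) + 1)) with h | h
    · rw [h.neg_one_pow]; simp
    · rw [h.neg_one_pow]; simp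
  set A := bigM hd' I₀.1 I₀.2 v with hA
  have hdetA : A.det ≠ 0 := by
    rw [hA, det_bigM hd' hnpos]
    exact mul_ne_zero (hsgn_ne I₀.1) hminor0
  have hunit : IsUnit A.det := isUnit_iff_ne_zero.mpr hdetA
  set C := A⁻¹ with hC
  have hCA : C * A = 1 := Matrix.nonsing_inv_mul A hunit
  have hdetC : C.det = A.det⁻¹ := by rw [hC, Matrix.det_nonsing_inv, Ring.inverse_eq_inv]
  have hCv : ∀ (a : Fin d) (s : Fin i),
      (C * v) a s = if a = (phi hd').symm (Sum.inl s) then (1 : F) else 0 := by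
    intro a s
    have h1 : (C * A) a ((phi hd').symm (Sum.inl s)) = (C * v) a s := by
      rw [Matrix.mul_apply, Matrix.mul_apply]
      apply Finset.sum_congr rfl
      intro b _
      congr 1
      show A b ((phi hd').symm (Sum.inl s)) = v b s
      rw [hA]
      show Sum.elim (fun s' => v b s') _ (phi hd' ((phi hd').symm (Sum.inl s))) = v b s
      rw [Equiv.apply_symm_apply]
      rfl
    rw [← h1, hCA, Matrix.one_apply]
  set u : Matrix (Fin d) (Fin (d - i)) F := Matrix.of fun r t =>
    (if t = (⟨0, hnpos⟩ : Fin (d - i)) then A.det else 1) * C ((phi hd').symm (Sum.inr t)) r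
    with hu
  refine ⟨u, ?_⟩
  intro J
  have hIc : (J.1ᶜ).card = i := by rw [Finset.card_compl, J.2, Fintype.card_fin]; omega
  set I := J.1ᶜ with hIdef
  set M' := bigM hd' I hIc v with hM'
  set eJJ := ⇑(Iᶜ.orderEmbOfFin (compl_card hd' hIc)) with heJJ
  set D : Matrix (Fin (d - i)) (Fin (d - i)) F :=
    Matrix.of fun t' t => C ((phi hd').symm (Sum.inr t')) (eJJ t) with hD
  set B : Matrix (Fin i) (Fin (d - i)) F :=
    Matrix.of fun s t => C ((phi hd').symm (Sum.inl s)) (eJJ t) with hB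
  have hCM : C * M' = (Matrix.fromBlocks 1 B 0 D).submatrix (phi hd') (phi hd') := by
    ext a c
    rw [Matrix.submatrix_apply, Matrix.mul_apply]
    rcases hc : phi hd' c with s | t
    · have hMcol : ∀ b, M' b c = v b s := by
        intro b
        show Sum.elim (fun s' => v b s') _ (phi hd' c) = v b s
        rw [hc]
        rfl
      have hsum : ∑ b, C a b * M' b c = (C * v) a s := by
        rw [Matrix.mul_apply]
        exact Finset.sum_congr rfl fun b _ => by rw [hMcol b]
      rw [hsum, hCv a s]
      rcases ha : phi hd' a with s' | t'
      · have haeq : a = (phi hd').symm (Sum.inl s') := by rw [← ha, Equiv.symm_apply_apply]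
        simp only [Matrix.fromBlocks_apply₁₁, Matrix.one_apply]
        by_cases h : s' = s
        · rw [if_pos (by rw [haeq, h]), if_pos h]
        · rw [if_neg, if_neg h]
          intro hcon
          apply h
          have h2 := congrArg (phi hd') hcon
          rw [ha, Equiv.apply_symm_apply] at h2
          exact Sum.inl.inj h2
      · simp only [Matrix.fromBlocks_apply₂₁, Matrix.zero_apply]
        rw [if_neg]
        intro hcon
        have h2 := congrArg (phi hd') hcon
        rw [ha, Equiv.apply_symm_apply] at h2
        simp at h2
    · have hMcol : ∀ b, M' b c = if b = eJJ t then (1 : F) else 0 := by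
        intro b
        show Sum.elim (fun s' => v b s') _ (phi hd' c) = _
        rw [hc]
        rfl
      have hsum : ∑ b, C a b * M' b c = C a (eJJ t) := by
        rw [Finset.sum_congr rfl fun b _ => by rw [hMcol b]]
        simp [mul_ite, mul_one, mul_zero]
      rw [hsum]
      rcases ha : phi hd' a with s' | t'
      · have haeq : a = (phi hd').symm (Sum.inl s') := by rw [← ha, Equiv.symm_apply_apply]
        simp only [Matrix.fromBlocks_apply₁₂, hB, Matrix.of_apply]
        rw [haeq]
      · have haeq : a = (phi hd').symm (Sum.inr t') := by rw [← ha, Equiv.symm_apply_apply]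
        simp only [Matrix.fromBlocks_apply₂₂, hD, Matrix.of_apply]
        rw [haeq]
  have hdetCM : C.det * M'.det = D.det := by
    rw [← Matrix.det_mul, hCM, Matrix.det_submatrix_equiv_self,
      Matrix.det_fromBlocks_zero₂₁, Matrix.det_one, one_mul]
  have hdetM' : M'.det = ((sgn' I : ℤ) : F) * (v.submatrix (⇑(I.orderEmbOfFin hIc)) id).det :=
    det_bigM hd' hnpos I hIc v
  -- minor u J
  have hJrow : ⇑(J.1.orderEmbOfFin J.2) = eJJ := by
    rw [heJJ]
    exact orderEmbOfFin_congr (by rw [hIdef, compl_compl]) J.2 (compl_card hd' hIc)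
  have hminoru : minor u J = A.det * D.det := by
    rw [minor, hrowmap (d - i) J]
    have hsub : u.submatrix (⇑(J.1.orderEmbOfFin J.2)) id
        = Matrix.of fun s t => (if t = (⟨0, hnpos⟩ : Fin (d - i)) then A.det else 1)
            * (D.transpose) s t := by
      ext s t
      rw [Matrix.submatrix_apply, hJrow]
      rfl
    rw [hsub, Matrix.det_mul_row, Matrix.det_transpose]
    congr 1
    rw [Finset.prod_ite_eq' Finset.univ (⟨0, hnpos⟩ : Fin (d - i)) (fun _ => A.det)]
    simp
  have hfinal : minor u J = ((sgn' I : ℤ) : F) * (v.submatrix (⇑(I.orderEmbOfFin hIc)) id).det := by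
    rw [hminoru, ← hdetCM, hdetM', hdetC]
    field_simp
  rw [hfinal]
  show ((sgn (J.1ᶜ) : ℤ) : F) * w ⟨J.1ᶜ, _⟩ = _
  rw [hv ⟨J.1ᶜ, _⟩, minor, hrowmap i ⟨J.1ᶜ, _⟩, hsgn_eq]

end
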